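/- arXiv:0906.1957 — 5 statements merged into one kernel-verified Lean document; each statement's English description precedes it below -/
import Mathlib

section
/- Every sequence f : ℕ → ℂ satisfying f(n) = 1/(n! + 1) for all n ≥ 1 is not holonomic. -/
/-- A sequence `f : ℕ → ℂ` is *holonomic* (P-recursive) if there exist `d ∈ ℕ`,
polynomials `p_0, …, p_d ∈ ℂ[X]`, not all zero, and `N ∈ ℕ` such that
`∑_{k=0}^d p_k(n) · f(n+k) = 0` for all `n ≥ N`. -/
def IsHolonomic (f : ℕ → ℂ) : Prop :=
  ∃ (d N : ℕ) (p : Fin (d + 1) → Polynomial ℂ),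
    (∃ k, p k ≠ 0) ∧
    ∀ n : ℕ, N ≤ n → ∑ k : Fin (d + 1), (p k).eval (n : ℂ) * f (n + (k : ℕ)) = 0

/-!
Put `F(n) = (n + d)!` and `cₖ(n) = (n + d)! / (n + k)!`, a polynomial in `n`. A recurrence
`∑ₖ pₖ(n) f(n + k) = 0` for `f(n) = 1 / (n! + 1)` reads `S₀ = 0`, where
`Sₘ = ∑ₖ pₖ cₖ^(m+1) / (F + cₖ)`. Since `c^(m+1) = F · c^(m+1) / (F + c) + c^(m+2) / (F + c)`,
once `Sₘ` vanishes for large `n` the polynomial `∑ₖ pₖ cₖ^(m+1)` agrees there with `Sₘ₊₁`,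
which is `O(poly(n) / n!)`; so that polynomial is zero, and then `Sₘ₊₁` vanishes as well.
Hence all power sums `∑ₖ pₖ cₖ^(m+1)` vanish, and as the `cₖ` are nonzero and pairwise distinct
(of degree `d - k`), the Vandermonde determinant forces every `pₖ = 0`.
-/

open Polynomial Filter Topology Finset
open scoped Nat

theorem tendsto_natCast_pow_div_factorial (K : ℕ) :
    Tendsto (fun n : ℕ => (n : ℝ) ^ K / n !) atTop (𝓝 0) := by
  refine squeeze_zero (fun n => by positivity) (fun n => ?_)
    (FloorSemiring.tendsto_pow_div_factorial_atTop ((2 : ℝ) ^ K))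
  gcongr
  calc (n : ℝ) ^ K ≤ ((2 : ℝ) ^ n) ^ K := by gcongr; exact_mod_cast n.lt_two_pow_self.le
    _ = ((2 : ℝ) ^ K) ^ n := by rw [← pow_mul, ← pow_mul, mul_comm]

namespace Polynomial

theorem tendsto_eval_natCast_div_factorial (P : ℂ[X]) :
    Tendsto (fun n : ℕ => P.eval (n : ℂ) / n !) atTop (𝓝 0) := by
  have hpow (i : ℕ) : Tendsto (fun n : ℕ => (n : ℂ) ^ i / n !) atTop (𝓝 0) := by
    simpa [Function.comp_def] using
      (Complex.continuous_ofReal.tendsto 0).comp (tendsto_natCast_pow_div_factorial i)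
  simpa [eval_eq_sum_range, Finset.sum_div, mul_div_assoc] using
    tendsto_finsetSum (range (P.natDegree + 1)) fun i _ => (hpow i).const_mul (P.coeff i)

theorem tendsto_eval_natCast_div_of_factorial_le (P : ℂ[X]) {D : ℕ → ℕ} (hD : ∀ n, n ! ≤ D n) :
    Tendsto (fun n : ℕ => P.eval (n : ℂ) / D n) atTop (𝓝 0) := by
  refine squeeze_zero_norm (fun n => ?_)
    (tendsto_norm_zero.comp (tendsto_eval_natCast_div_factorial P))
  simp only [Function.comp_apply, norm_div, Complex.norm_natCast]
  gcongr
  exact_mod_cast hD n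

theorem eq_zero_of_tendsto_eval_natCast {Q : ℂ[X]}
    (h : Tendsto (fun n : ℕ => Q.eval (n : ℂ)) atTop (𝓝 0)) : Q = 0 := by
  by_cases hdeg : 0 < Q.degree
  · have hnorm := Q.tendsto_norm_atTop hdeg (z := fun n : ℕ => (n : ℂ))
      (by simpa using tendsto_natCast_atTop_atTop)
    exact absurd (tendsto_norm_zero.comp h) (not_tendsto_nhds_of_tendsto_atTop hnorm 0)
  · rw [eq_C_of_degree_le_zero (not_lt.mp hdeg)] at h ⊢
    simpa using h

end Polynomial

theorem eq_zero_of_forall_sum_mul_pow_succ_eq_zero {R : Type*} [CommRing R] [IsDomain R] {n : ℕ}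
    {p c : Fin n → R} (hc : Function.Injective c) (hc0 : ∀ i, c i ≠ 0)
    (h : ∀ m < n, ∑ i, p i * c i ^ (m + 1) = 0) : p = 0 := by
  have hpc := Matrix.eq_zero_of_forall_pow_sum_mul_pow_eq_zero (v := fun i => p i * c i) hc
    fun m => by simpa [mul_assoc, ← pow_succ'] using h m m.isLt
  funext i
  exact (mul_eq_zero.mp (congrFun hpc i)).resolve_right (hc0 i)

theorem sum_mul_pow_succ_eq_zero_of_eventually_sum_div_eq_zero {ι : Type*} [Fintype ι]
    (p c : ι → ℂ[X]) (F : ℕ → ℂ) (hF : ∀ n i, F n + (c i).eval (n : ℂ) ≠ 0)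
    (hsmall : ∀ (P : ℂ[X]) (i : ι),
      Tendsto (fun n : ℕ => P.eval (n : ℂ) / (F n + (c i).eval (n : ℂ))) atTop (𝓝 0))
    (h : ∀ᶠ n : ℕ in atTop,
      ∑ i, (p i).eval (n : ℂ) * (c i).eval (n : ℂ) / (F n + (c i).eval (n : ℂ)) = 0)
    (m : ℕ) : ∑ i, p i * c i ^ (m + 1) = 0 := by
  set S : ℕ → ℕ → ℂ := fun m n =>
    ∑ i, (p i).eval (n : ℂ) * (c i).eval (n : ℂ) ^ (m + 1) / (F n + (c i).eval (n : ℂ))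
  have hsplit (m n : ℕ) :
      (∑ i, p i * c i ^ (m + 1)).eval (n : ℂ) = F n * S m n + S (m + 1) n := by
    simp only [S, eval_finsetSum, eval_mul, eval_pow, Finset.mul_sum, ← Finset.sum_add_distrib]
    refine Finset.sum_congr rfl fun i _ => ?_
    field_simp [hF n i]
    ring
  have hS_tendsto (m : ℕ) : Tendsto (S m) atTop (𝓝 0) := by
    have := tendsto_finsetSum (univ : Finset ι) fun i _ => hsmall (p i * c i ^ (m + 1)) i
    simpa only [eval_mul, eval_pow, sum_const_zero] using this
  have hstep (m : ℕ) (hm : ∀ᶠ n in atTop, S m n = 0) :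
      ∑ i, p i * c i ^ (m + 1) = 0 ∧ ∀ᶠ n in atTop, S (m + 1) n = 0 := by
    have heq : S (m + 1) =ᶠ[atTop] fun n => (∑ i, p i * c i ^ (m + 1)).eval (n : ℂ) :=
      hm.mono fun n hn => by simp only [hsplit, hn, mul_zero, zero_add]
    have hQ := eq_zero_of_tendsto_eval_natCast ((hS_tendsto (m + 1)).congr' heq)
    exact ⟨hQ, heq.mono fun n hn => by simpa [hQ] using hn⟩
  have hS (m : ℕ) : ∀ᶠ n in atTop, S m n = 0 := by
    induction m with
    | zero => simpa [S] using h
    | succ m ih => exact (hstep m ih).2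
  exact (hstep m (hS m)).1

/-- For `k ≤ d`, its value at `n` is `(n + d)! / (n + k)! = (n + k + 1) ⋯ (n + d)`. -/
noncomputable def factorialQuotient (d k : ℕ) : ℂ[X] :=
  (ascPochhammer ℂ (d - k)).comp (X + C ((k + 1 : ℕ) : ℂ))

theorem factorialQuotient_eval_natCast (d k n : ℕ) :
    (factorialQuotient d k).eval (n : ℂ) = (n + k + 1).ascFactorial (d - k) := by
  rw [factorialQuotient, eval_comp, eval_add, eval_X, eval_C, ← Nat.cast_add,
    ← ascPochhammer_eval_cast, ascPochhammer_nat_eq_ascFactorial, ← add_assoc]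

theorem factorialQuotient_ne_zero (d k : ℕ) : factorialQuotient d k ≠ 0 :=
  ((monic_ascPochhammer ℂ (d - k)).comp_X_add_C _).ne_zero

theorem natDegree_factorialQuotient (d k : ℕ) : (factorialQuotient d k).natDegree = d - k := by
  rw [factorialQuotient, natDegree_comp, ascPochhammer_natDegree, natDegree_X_add_C, mul_one]

theorem factorialQuotient_injective (d : ℕ) :
    Function.Injective fun k : Fin (d + 1) => factorialQuotient d k := by
  intro i j hij
  have hdeg := congrArg natDegree hij
  simp only [natDegree_factorialQuotient] at hdeg
  exact Fin.ext (by omega)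

theorem factorial_mul_ascFactorial_of_le {d k : ℕ} (hk : k ≤ d) (n : ℕ) :
    (n + k)! * (n + k + 1).ascFactorial (d - k) = (n + d)! := by
  rw [Nat.factorial_mul_ascFactorial, Nat.add_assoc, Nat.add_sub_cancel' hk]

theorem factorialQuotient_div_factorial_add {d k : ℕ} (hk : k ≤ d) (n : ℕ) :
    (factorialQuotient d k).eval (n : ℂ) / ((n + d)! + (factorialQuotient d k).eval (n : ℂ)) =
      1 / ((n + k)! + 1) := by
  have hpos : ((n + k + 1).ascFactorial (d - k) : ℂ) ≠ 0 :=
    Nat.cast_ne_zero.mpr (Nat.ascFactorial_pos _ _).ne'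
  rw [factorialQuotient_eval_natCast, ← factorial_mul_ascFactorial_of_le hk n]
  push_cast
  field_simp

/-- Every sequence `f : ℕ → ℂ` satisfying `f(n) = 1/(n! + 1)` for all `n ≥ 1`
is not holonomic. -/
theorem one_div_factorial_add_one_not_holonomic
    (f : ℕ → ℂ) (hf : ∀ n : ℕ, 1 ≤ n → f n = 1 / ((n.factorial : ℂ) + 1)) :
    ¬ IsHolonomic f := by
  rintro ⟨d, N, p, ⟨k, hk⟩, hrec⟩
  have hpow := sum_mul_pow_succ_eq_zero_of_eventually_sum_div_eq_zero p
    (fun i => factorialQuotient d i) (fun n => ((n + d)! : ℂ)) ?_ ?_ ?_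
  · exact hk (congrFun (eq_zero_of_forall_sum_mul_pow_succ_eq_zero (factorialQuotient_injective d)
      (fun i => factorialQuotient_ne_zero d i) fun m _ => hpow m) k)
  · intro n i
    rw [factorialQuotient_eval_natCast]
    exact_mod_cast (Nat.add_pos_left (Nat.factorial_pos _) _).ne'
  · intro P i
    simp only [factorialQuotient_eval_natCast]
    exact_mod_cast P.tendsto_eval_natCast_div_of_factorial_le fun n =>
      (Nat.factorial_le (Nat.le_add_right n d)).trans (Nat.le_add_right _ _)
  · filter_upwards [eventually_ge_atTop (max N 1)] with n hn
    rw [← hrec n (le_of_max_le_left hn)]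
    refine Finset.sum_congr rfl fun i _ => ?_
    rw [mul_div_assoc, factorialQuotient_div_factorial_add (Nat.lt_succ_iff.mp i.isLt),
      hf _ (by omega)]
end

section
/- Every sequence f : ℕ → ℂ satisfying f(n) = Γ(n·√2) for all n ≥ 1, where Γ is the Gamma function evaluated at the positive real number n√2, is not holonomic. -/
open Real Polynomial Filter Asymptotics

namespace Real

theorem Gamma_add_le_rpow_mul_Gamma {x s : ℝ} (hx : 0 < x) (hs₀ : 0 ≤ s) (hs₁ : s ≤ 1) :
    Gamma (x + s) ≤ x ^ s * Gamma x := by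
  rcases hs₀.eq_or_lt with rfl | hs₀
  · simp
  rcases hs₁.eq_or_lt with rfl | hs₁
  · simp [Gamma_add_one hx.ne']
  have hΓ := Gamma_pos_of_pos hx
  calc Gamma (x + s) = Gamma ((1 - s) * x + s * (x + 1)) := by ring_nf
    _ ≤ Gamma x ^ (1 - s) * Gamma (x + 1) ^ s :=
        Gamma_mul_add_mul_le_rpow_Gamma_mul_rpow_Gamma hx (by linarith) (by linarith) hs₀
          (by ring)
    _ = x ^ s * Gamma x := by
        rw [Gamma_add_one hx.ne', mul_rpow hx.le hΓ.le, mul_left_comm, ← rpow_add hΓ,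
          sub_add_cancel, rpow_one]

theorem rpow_mul_Gamma_le_two_mul_Gamma_add {x s : ℝ} (hx : 1 ≤ x) (hs₀ : 0 ≤ s) (hs₁ : s ≤ 1) :
    x ^ s * Gamma x ≤ 2 * Gamma (x + s) := by
  have hx₀ : 0 < x := by linarith
  have hshift : x * Gamma x ≤ (x + s) ^ (1 - s) * Gamma (x + s) := by
    simpa [Gamma_add_one hx₀.ne'] using
      Gamma_add_le_rpow_mul_Gamma (x := x + s) (s := 1 - s) (by linarith) (by linarith)
        (by linarith)
  have hbase : (x + s) ^ (1 - s) ≤ 2 * x ^ (1 - s) :=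
    calc (x + s) ^ (1 - s) ≤ (2 * x) ^ (1 - s) := by gcongr; linarith
      _ = 2 ^ (1 - s) * x ^ (1 - s) := mul_rpow zero_le_two hx₀.le
      _ ≤ 2 * x ^ (1 - s) := by
        gcongr; exact rpow_le_self_of_one_le one_le_two (by linarith)
  have hpos : 0 < x ^ (1 - s) := rpow_pos_of_pos hx₀ _
  refine le_of_mul_le_mul_right ?_ hpos
  calc x ^ s * Gamma x * x ^ (1 - s) = x * Gamma x := by
        rw [mul_right_comm, ← rpow_add hx₀, add_sub_cancel, rpow_one]
    _ ≤ (x + s) ^ (1 - s) * Gamma (x + s) := hshift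
    _ ≤ 2 * x ^ (1 - s) * Gamma (x + s) := by gcongr
    _ = 2 * Gamma (x + s) * x ^ (1 - s) := by ring

theorem isTheta_Gamma_add_of_le_one {s : ℝ} (hs₀ : 0 ≤ s) (hs₁ : s ≤ 1) :
    (fun x => Gamma (x + s)) =Θ[atTop] fun x => x ^ s * Gamma x := by
  refine ⟨IsBigO.of_bound 1 ?_, IsBigO.of_bound 2 ?_⟩ <;>
    filter_upwards [eventually_ge_atTop 1] with x hx <;>
    have hx₀ : 0 < x := by linarith
  · rw [norm_of_nonneg (by positivity), norm_of_nonneg (by positivity), one_mul]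
    exact Gamma_add_le_rpow_mul_Gamma hx₀ hs₀ hs₁
  · rw [norm_of_nonneg (by positivity), norm_of_nonneg (by positivity)]
    exact rpow_mul_Gamma_le_two_mul_Gamma_add hx hs₀ hs₁

theorem isTheta_Gamma_add_add_one {s : ℝ}
    (h : (fun x => Gamma (x + s)) =Θ[atTop] fun x => x ^ s * Gamma x) :
    (fun x => Gamma (x + (s + 1))) =Θ[atTop] fun x => x ^ (s + 1) * Gamma x := by
  have hlin : (fun x : ℝ => x + s) =Θ[atTop] fun x => x :=
    (IsEquivalent.refl.add_const_of_norm_tendsto_atTop tendsto_norm_atTop_atTop).isTheta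
  refine EventuallyEq.trans_isTheta ?_ ((hlin.mul h).trans_eventuallyEq ?_) <;>
    filter_upwards [eventually_gt_atTop (max 0 (-s))] with x hx
  · rw [← add_assoc, Gamma_add_one (by linarith [le_max_right 0 (-s)])]
  · rw [rpow_add_one (by linarith [le_max_left 0 (-s)])]; ring

theorem isTheta_Gamma_add {s : ℝ} (hs : 0 ≤ s) :
    (fun x => Gamma (x + s)) =Θ[atTop] fun x => x ^ s * Gamma x := by
  obtain ⟨t, m, ht₀, ht₁, rfl⟩ : ∃ (t : ℝ) (m : ℕ), 0 ≤ t ∧ t ≤ 1 ∧ s = t + m :=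
    ⟨s - ⌊s⌋₊, ⌊s⌋₊, sub_nonneg.2 (Nat.floor_le hs), by linarith [Nat.lt_floor_add_one s],
      by ring⟩
  clear hs
  induction m with
  | zero => simpa using isTheta_Gamma_add_of_le_one ht₀ ht₁
  | succ m ih =>
    push_cast
    rw [← add_assoc]
    exact isTheta_Gamma_add_add_one ih

theorem isTheta_Gamma_natCast_add_mul {c t : ℝ} (hc : 0 < c) (ht : 0 ≤ t) :
    (fun n : ℕ => Gamma ((n + t) * c)) =Θ[atTop] fun n => (n : ℝ) ^ (c * t) * Gamma (n * c) := by
  have hscale : Tendsto (fun n : ℕ => (n : ℝ) * c) atTop atTop :=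
    tendsto_natCast_atTop_atTop.atTop_mul_const hc
  have h := isTheta_Gamma_add (mul_nonneg hc.le ht)
  have hcomp : (fun n : ℕ => Gamma ((n + t) * c)) =Θ[atTop]
      fun n => (n * c) ^ (c * t) * Gamma (n * c) := by
    simp only [add_mul, mul_comm t c]
    exact ⟨h.1.comp_tendsto hscale, h.2.comp_tendsto hscale⟩
  refine (hcomp.trans_eventuallyEq (Eventually.of_forall fun n => ?_)).trans
    (IsTheta.const_mul_left (rpow_pos_of_pos hc (c * t)).ne' (isTheta_refl _ _))
  simp only [mul_rpow (Nat.cast_nonneg n) hc.le]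
  ring

end Real

theorem Polynomial.isTheta_eval_natCast {𝕜 : Type*} [RCLike 𝕜] {p : 𝕜[X]} (hp : p ≠ 0) :
    (fun n : ℕ => p.eval (n : 𝕜)) =Θ[atTop] fun n => (n : ℝ) ^ p.natDegree := by
  have hlead : (fun n : ℕ => p.eval (n : 𝕜)) ~[atTop]
      fun n => p.leadingCoeff * (n : 𝕜) ^ p.natDegree :=
    (isEquivalent_cobounded_leading_monomial (P := p)).comp_tendsto
      (tendsto_natCast_atTop_cobounded (α := 𝕜))
  refine hlead.isTheta.trans (IsTheta.const_mul_left (leadingCoeff_ne_zero.2 hp) ?_)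
  exact IsTheta.of_norm_eventuallyEq_norm (Eventually.of_forall fun n => by simp)

theorem isLittleO_rpow_rpow_atTop {a b : ℝ} (hab : a < b) :
    (fun x : ℝ => x ^ a) =o[atTop] fun x => x ^ b := by
  refine (isLittleO_iff_tendsto' ?_).2 ?_
  · filter_upwards [eventually_gt_atTop 0] with x hx h
    exact absurd h (rpow_pos_of_pos hx b).ne'
  · refine (tendsto_rpow_neg_atTop (sub_pos.2 hab)).congr' ?_
    filter_upwards [eventually_gt_atTop 0] with x hx
    rw [← rpow_sub hx, neg_sub]

theorem isLittleO_natCast_rpow_mul {a b : ℝ} (hab : a < b) (g : ℕ → ℝ) :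
    (fun n : ℕ => (n : ℝ) ^ a * g n) =o[atTop] fun n => (n : ℝ) ^ b * g n :=
  ((isLittleO_rpow_rpow_atTop hab).comp_tendsto tendsto_natCast_atTop_atTop).mul_isBigO
    (isBigO_refl g _)

theorem Irrational.eq_of_natCast_add_mul_eq {c : ℝ} (hc : Irrational c) {a b m n : ℕ}
    (h : a + c * m = b + c * n) : m = n := by
  by_contra hmn
  have hsub : ((m : ℤ) - n) ≠ 0 := sub_ne_zero.2 (by exact_mod_cast hmn)
  exact (hc.intCast_mul hsub).ne_int ((b : ℤ) - a) (by push_cast; linarith)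

theorem Asymptotics.not_eventually_sum_eq_zero {ι α E : Type*} [Fintype ι]
    [NormedAddCommGroup E] {l : Filter α} {T : ι → α → E} {K : ι}
    (hK : ∃ᶠ x in l, T K x ≠ 0) (hT : ∀ k ≠ K, T k =o[l] T K) :
    ¬∀ᶠ x in l, ∑ k, T k x = 0 := by
  classical
  intro hsum
  have hrest : (fun x => -∑ k ∈ Finset.univ.erase K, T k x) =o[l] T K :=
    (IsLittleO.fun_sum fun k hk => hT k (Finset.ne_of_mem_erase hk)).neg_left
  refine isLittleO_irrefl hK (EventuallyEq.trans_isLittleO ?_ hrest)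
  filter_upwards [hsum] with x hx
  rw [← Finset.add_sum_erase _ _ (Finset.mem_univ K)] at hx
  exact eq_neg_of_add_eq_zero_left hx

theorem isTheta_eval_natCast_mul_Gamma {c : ℝ} (hc : 0 < c) {p : ℂ[X]} (hp : p ≠ 0) (k : ℕ) :
    (fun n : ℕ => p.eval (n : ℂ) * (Gamma ((n + k) * c) : ℂ)) =Θ[atTop]
      fun n => (n : ℝ) ^ (p.natDegree + c * k) * Gamma (n * c) := by
  have h := (isTheta_eval_natCast hp).mul
    ((Complex.isTheta_ofReal _ _).trans (isTheta_Gamma_natCast_add_mul hc k.cast_nonneg))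
  refine h.trans_eventuallyEq ?_
  filter_upwards [eventually_gt_atTop 0] with n hn
  rw [rpow_add (by exact_mod_cast hn), rpow_natCast, mul_assoc]

theorem not_isHolonomic_of_eventually_eq_Gamma_mul {c : ℝ} (hc : 0 < c) (hirr : Irrational c)
    {f : ℕ → ℂ} (hf : ∀ᶠ n in atTop, f n = Gamma (n * c)) : ¬IsHolonomic f := by
  rintro ⟨d, N, p, ⟨k₀, hk₀⟩, hrec⟩
  classical
  set w : Fin (d + 1) → ℝ := fun k => (p k).natDegree + c * (k : ℕ)
  obtain ⟨K, hK, hmax⟩ := (Finset.univ.filter fun k => p k ≠ 0).exists_max_image w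
    ⟨k₀, by simpa using hk₀⟩
  simp only [Finset.mem_filter, Finset.mem_univ, true_and] at hK hmax
  have hlt : ∀ k, p k ≠ 0 → k ≠ K → w k < w K := fun k hk hne =>
    (hmax k hk).lt_of_ne fun h => hne (Fin.ext (hirr.eq_of_natCast_add_mul_eq h))
  have hterm : ∀ k : Fin (d + 1), (fun n : ℕ => (p k).eval (n : ℂ) * f (n + k)) =ᶠ[atTop]
      fun n => (p k).eval (n : ℂ) * (Gamma ((n + (k : ℕ)) * c) : ℂ) := fun k => by
    filter_upwards [(tendsto_add_atTop_nat k).eventually hf] with n hn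
    rw [hn]
    push_cast
    rfl
  have hΘ : ∀ k, p k ≠ 0 → (fun n : ℕ => (p k).eval (n : ℂ) * f (n + k)) =Θ[atTop]
      fun n => (n : ℝ) ^ w k * Gamma (n * c) := fun k hk =>
    (hterm k).trans_isTheta (isTheta_eval_natCast_mul_Gamma hc hk k)
  refine not_eventually_sum_eq_zero (K := K) ?_ (fun k hne => ?_) (eventually_atTop.2 ⟨N, hrec⟩)
  · refine Eventually.frequently ?_
    filter_upwards [(hΘ K hK).eq_zero_iff, eventually_gt_atTop 0] with n hzero hn
    rw [Ne, hzero]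
    have : (0 : ℝ) < n := by exact_mod_cast hn
    positivity
  · by_cases hk : p k = 0
    · simp [hk]
    · exact (hΘ k hk).trans_isLittleO
        ((isLittleO_natCast_rpow_mul (hlt k hk hne) _).trans_isTheta (hΘ K hK).symm)

/-- Every sequence `f : ℕ → ℂ` satisfying `f(n) = Γ(n√2)` for all `n ≥ 1`
is not holonomic. -/
theorem gamma_sqrt_two_not_holonomic
    (f : ℕ → ℂ) (hf : ∀ n : ℕ, 1 ≤ n → f n = (Real.Gamma ((n : ℝ) * Real.sqrt 2) : ℂ)) :
    ¬ IsHolonomic f :=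
  not_isHolonomic_of_eventually_eq_Gamma_mul (by positivity) irrational_sqrt_two
    (eventually_atTop.2 ⟨1, hf⟩)
end

section
/- Every sequence f : ℕ → ℂ satisfying f(n) = 1/(2^n − 1) for all n ≥ 1 is not holonomic, and every sequence g : ℕ → ℂ satisfying g(n) = 1/(2^n + 1) for all n ≥ 1 is not holonomic. -/
/-!
Multiplying the recurrence `∑ₖ pₖ(n) f(n+k) = 0` by `∏ⱼ (2^(n+j) ∓ 1)` turns it into a polynomial
identity `Q(n, 2^n) = 0` for all large `n`, with `Q(T, X) = ∑ₖ pₖ(T) ∏_{j ≠ k} (2^j X ∓ 1)`.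
An exponential polynomial `∑ᵢ qᵢ(n) cᵢⁿ` whose bases have distinct absolute values vanishes for all
large `n` only if every `qᵢ` is zero (the term with the largest `|cᵢ|` dominates), so `Q = 0`.
But substituting `X = ±2^(-k)` kills every summand of `Q` except `pₖ(T)` times a nonzero constant.
-/

open Filter Polynomial Finset
open scoped Topology

namespace Polynomial

theorem tendsto_eval_natCast_mul_pow_zero {R : Type*} [NormedRing R] (q : R[X]) {c : R}
    (hc : ‖c‖ < 1) : Tendsto (fun n : ℕ => q.eval (n : R) * c ^ n) atTop (𝓝 0) := by
  simp_rw [eval_eq_sum_range, sum_mul, mul_assoc]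
  rw [← sum_const_zero (s := range (q.natDegree + 1))]
  refine tendsto_finsetSum _ fun j _ => ?_
  rw [← mul_zero (q.coeff j)]
  refine .const_mul _ ?_
  have := isLittleO_pow_const_mul_const_pow_const_pow_of_norm_lt j hc
  simp only [one_pow] at this
  exact (Asymptotics.isLittleO_one_iff ℝ).1 this

variable {𝕜 : Type*} [RCLike 𝕜]

theorem eq_zero_of_tendsto_eval_natCast_zero {q : 𝕜[X]}
    (h : Tendsto (fun n : ℕ => q.eval (n : 𝕜)) atTop (𝓝 0)) : q = 0 := by
  by_cases hdeg : 0 < q.degree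
  · have hnorm := q.tendsto_norm_atTop hdeg (z := fun n : ℕ => (n : 𝕜))
      (by simpa only [RCLike.norm_natCast] using tendsto_natCast_atTop_atTop)
    exact absurd (by simpa using h.norm) (not_tendsto_nhds_of_tendsto_atTop hnorm 0)
  · rw [eq_C_of_degree_le_zero (not_lt.1 hdeg)] at h ⊢
    simpa using h

theorem eq_zero_of_eventually_sum_eval_natCast_mul_pow_eq_zero {ι : Type*} (s : Finset ι)
    (q : ι → 𝕜[X]) {c : ι → 𝕜} (hc₀ : ∀ i ∈ s, c i ≠ 0)
    (hc : Set.InjOn (fun i => ‖c i‖) s)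
    (h : ∀ᶠ n : ℕ in atTop, ∑ i ∈ s, (q i).eval (n : 𝕜) * c i ^ n = 0) :
    ∀ i ∈ s, q i = 0 := by
  classical
  by_contra! hne
  obtain ⟨i₀, hi₀, hmax⟩ := (s.filter (q · ≠ 0)).exists_max_image (fun i => ‖c i‖)
    (by simpa [Finset.Nonempty] using hne)
  rw [mem_filter] at hi₀
  refine hi₀.2 (eq_zero_of_tendsto_eval_natCast_zero ?_)
  -- After dividing by `c i₀ ^ n`, each other term is a polynomial times a geometric sequence
  -- of ratio `< 1`.
  have hrest : Tendsto (fun n : ℕ => -∑ i ∈ s.erase i₀, (q i).eval (n : 𝕜) * (c i / c i₀) ^ n)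
      atTop (𝓝 0) := by
    rw [← neg_zero, ← sum_const_zero (s := s.erase i₀)]
    refine (tendsto_finsetSum _ fun i hi => ?_).neg
    obtain ⟨hii₀, his⟩ := mem_erase.1 hi
    by_cases hqi : q i = 0
    · simp [hqi]
    refine tendsto_eval_natCast_mul_pow_zero _ ?_
    rw [norm_div, div_lt_one (norm_pos_iff.2 (hc₀ i₀ hi₀.1))]
    exact (hmax i (mem_filter.2 ⟨his, hqi⟩)).lt_of_ne fun h => hii₀ (hc his hi₀.1 h)
  refine hrest.congr' ?_
  filter_upwards [h] with n hn
  rw [← add_sum_erase s _ hi₀.1] at hn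
  have hpow : c i₀ ^ n ≠ 0 := pow_ne_zero _ (hc₀ i₀ hi₀.1)
  simp_rw [div_pow, ← mul_div_assoc, ← sum_div]
  field_simp
  linear_combination -hn

theorem eq_zero_of_eventually_eval₂_natCast_pow_eq_zero (Q : 𝕜[X][X]) {a : 𝕜} (ha : 1 < ‖a‖)
    (h : ∀ᶠ n : ℕ in atTop, Q.eval₂ (evalRingHom (n : 𝕜)) (a ^ n) = 0) : Q = 0 := by
  have ha₀ : a ≠ 0 := norm_pos_iff.1 (one_pos.trans ha)
  have hcoeff := eq_zero_of_eventually_sum_eval_natCast_mul_pow_eq_zero Q.support Q.coeff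
    (c := (a ^ ·)) (fun i _ => pow_ne_zero i ha₀)
    (fun i _ j _ hij => pow_right_injective₀ (one_pos.trans ha) ha.ne' (by simpa using hij))
    (h.mono fun n hn => by
      simpa [eval₂_eq_sum, Polynomial.sum_def, ← pow_mul, mul_comm n] using hn)
  by_contra hQ
  obtain ⟨i, hi⟩ := nonempty_support_iff.2 hQ
  exact mem_support_iff.1 hi (hcoeff i hi)

theorem sum_C_mul_map_C_prod_erase_ne_zero {K ι : Type*} [Field K] [Fintype ι] [DecidableEq ι]
    {p : ι → K[X]} {k : ι} (hk : p k ≠ 0) {b : ι → K} (hb : Function.Injective b)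
    (hb₀ : ∀ j, b j ≠ 0) {e : K} (he : e ≠ 0) :
    ∑ k, C (p k) * (∏ j ∈ univ.erase k, (C (b j) * X - C e)).map C ≠ 0 := by
  set y := e / b k
  have hfactor : ∀ j, b j * y - e = 0 ↔ j = k := fun j => by
    rw [sub_eq_zero, mul_div_assoc', div_eq_iff (hb₀ k), mul_comm, mul_right_inj' he, hb.eq_iff]
  have hprod : ∀ k', (∏ j ∈ univ.erase k', (C (b j) * X - C e)).eval y ≠ 0 ↔ k' = k := fun k' => by
    simp only [eval_prod, prod_ne_zero_iff, eval_sub, eval_mul, eval_C, eval_X, Ne, hfactor,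
      mem_erase, mem_univ, and_true]
    exact ⟨fun h => by_contra fun h' => h k (Ne.symm h') rfl, by rintro rfl j hj; exact hj⟩
  intro hQ
  have hQy := congrArg (eval (C y)) hQ
  rw [eval_finsetSum, sum_eq_single k, eval_zero] at hQy
  · simp only [eval_mul, eval_C, eval_map, eval₂_at_apply] at hQy
    exact mul_ne_zero hk (C_ne_zero.2 ((hprod k).2 rfl)) hQy
  · intro k' _ hk'
    simp [eval_map, eval₂_at_apply, not_not.1 (mt (hprod k').1 hk')]
  · simp

end Polynomial

theorem not_isHolonomic_of_eventually_eq_one_div_pow_sub {a e : ℂ} (ha : 1 < ‖a‖) (he : e ≠ 0)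
    {f : ℕ → ℂ} (hf : ∀ᶠ n in atTop, f n = 1 / (a ^ n - e)) : ¬ IsHolonomic f := by
  rintro ⟨d, N, p, ⟨k, hk⟩, hrec⟩
  have ha₀ : a ≠ 0 := norm_pos_iff.1 (one_pos.trans ha)
  have hpow_inj : Function.Injective fun j : Fin (d + 1) => a ^ (j : ℕ) := fun i j hij =>
    Fin.val_injective <|
      pow_right_injective₀ (one_pos.trans ha) ha.ne' (by simpa using congrArg norm hij)
  refine sum_C_mul_map_C_prod_erase_ne_zero hk hpow_inj (fun j => pow_ne_zero _ ha₀) he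
    (eq_zero_of_eventually_eval₂_natCast_pow_eq_zero _ ha ?_)
  -- Clearing the denominators `a ^ (n + j) - e` of the recurrence.
  have hne : ∀ᶠ n in atTop, a ^ n - e ≠ 0 := by
    filter_upwards [(tendsto_pow_atTop_atTop_of_one_lt ha).eventually_gt_atTop ‖e‖] with n hn
    exact sub_ne_zero.2 fun h => hn.ne' (by rw [← norm_pow, h])
  obtain ⟨M, hM⟩ := eventually_atTop.1 (hf.and hne)
  filter_upwards [eventually_ge_atTop (max N M)] with n hn
  set g : Fin (d + 1) → ℂ := fun j => a ^ (n + j) - e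
  have hg : ∀ j : Fin (d + 1), f (n + j) * g j = 1 := fun j => by
    obtain ⟨hfj, hgj⟩ := hM (n + j) (by omega)
    rw [hfj, one_div, inv_mul_cancel₀ hgj]
  have hC : (evalRingHom (n : ℂ)).comp C = RingHom.id ℂ := by ext; simp
  calc _ = ∑ k, (p k).eval (n : ℂ) * ∏ j ∈ univ.erase k, g j := by
        simp [g, eval₂_finsetSum, eval₂_map, hC, eval₂_id, eval_prod, pow_add, mul_comm]
    _ = (∑ k, (p k).eval (n : ℂ) * f (n + k)) * ∏ j, g j := by
        rw [sum_mul]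
        refine sum_congr rfl fun k _ => ?_
        rw [← mul_prod_erase univ g (mem_univ k), mul_assoc, ← mul_assoc (f _), hg, one_mul]
    _ = 0 := by rw [hrec n (by omega), zero_mul]

/-- Every sequence `f : ℕ → ℂ` satisfying `f(n) = 1/(2^n − 1)` for all `n ≥ 1` is not
holonomic, and every sequence `g : ℕ → ℂ` satisfying `g(n) = 1/(2^n + 1)` for all `n ≥ 1`
is not holonomic. -/
theorem one_div_two_pow_pm_one_not_holonomic :
    (∀ f : ℕ → ℂ, (∀ n : ℕ, 1 ≤ n → f n = 1 / ((2 : ℂ) ^ n - 1)) → ¬ IsHolonomic f) ∧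
    (∀ g : ℕ → ℂ, (∀ n : ℕ, 1 ≤ n → g n = 1 / ((2 : ℂ) ^ n + 1)) → ¬ IsHolonomic g) := by
  have htwo : 1 < ‖(2 : ℂ)‖ := by norm_num
  refine ⟨fun f hf => ?_, fun g hg => ?_⟩
  · exact not_isHolonomic_of_eventually_eq_one_div_pow_sub htwo one_ne_zero
      (eventually_atTop.2 ⟨1, hf⟩)
  · refine not_isHolonomic_of_eventually_eq_one_div_pow_sub htwo (neg_ne_zero.2 one_ne_zero)
      (eventually_atTop.2 ⟨1, fun n hn => ?_⟩)
    rw [hg n hn, sub_neg_eq_add]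
end

section
/- Let C := −1 + ∑_{k=2}^∞ ζ(k)/k!, where ζ is the Riemann zeta function. Then, as z → −1⁺ with z real in (−1, 0), ∑_{n=1}^∞ e^{1/n}·(−z)^n = 1/(1+z) + log(1/(1+z)) + C + O((1+z)·log(1/(1+z))). -/
/-!
Put `x = -z` and `r_n = e^{1/n} - 1 - 1/n`, so that `0 ≤ r_n ≤ 1/n²`. Then
`∑ e^{1/n} x^n = x/(1-x) + log(1/(1-x)) + ∑ r_n - ∑ r_n (1 - x^n)`. Expanding
`r_n = ∑_{k≥2} n^{-k}/k!` and summing over `n` first (all terms are nonnegative) gives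
`∑ r_n = ∑_{k≥2} ζ(k)/k!`.
For the error, Bernoulli's inequality `1 - x^n ≤ n t` with `t = 1 - x` bounds the terms `n ≤ N`
by `t/n`, and the tail is at most `∑_{n>N} 1/n² ≤ 1/N`; the choice `N = ⌊1/t⌋` gives
`O(t log(1/t))`.
-/

open Filter Asymptotics Finset Topology

theorem Real.hasSum_pow_add_two_div_factorial (y : ℝ) :
    HasSum (fun k : ℕ => y ^ (k + 2) / (k + 2).factorial) (Real.exp y - 1 - y) := by
  have h := (hasSum_nat_add_iff' 2).mpr
    (Real.exp_eq_exp_ℝ ▸ NormedSpace.expSeries_div_hasSum_exp y)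
  simpa [sum_range_succ, sub_sub] using h

theorem summable_one_div_nat_add_one_sq :
    Summable fun n : ℕ => 1 / ((n : ℝ) + 1) ^ 2 := by
  simpa using (summable_nat_add_iff 1).mpr
    (Real.summable_one_div_nat_pow.mpr one_lt_two)

theorem tsum_one_div_nat_add_one_sq_tail_le {N : ℕ} (hN : N ≠ 0) :
    ∑' i : ℕ, 1 / (((i + N : ℕ) : ℝ) + 1) ^ 2 ≤ 1 / (N : ℝ) := by
  refine Real.tsum_le_of_sum_range_le (fun _ => by positivity) fun m => ?_
  have hreindex : ∑ i ∈ range m, 1 / (((i + N : ℕ) : ℝ) + 1) ^ 2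
      = ∑ j ∈ Ioc N (N + m), ((j : ℝ) ^ 2)⁻¹ := by
    rw [← Ico_add_one_add_one_eq_Ioc, sum_Ico_eq_sum_range]
    refine sum_congr (by congr 1; omega) fun i _ => ?_
    push_cast; ring
  rw [hreindex]
  calc _ ≤ (N : ℝ)⁻¹ - ((N + m : ℕ) : ℝ)⁻¹ := sum_Ioc_inv_sq_le_sub hN (by omega)
    _ ≤ 1 / (N : ℝ) := by
      rw [one_div]; linarith [inv_nonneg.mpr (Nat.cast_nonneg (α := ℝ) (N + m))]

theorem riemannZeta_nat_add_two (k : ℕ) :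
    riemannZeta ((k : ℂ) + 2) =
      ((∑' n : ℕ, (1 / ((n : ℝ) + 1)) ^ (k + 2) : ℝ) : ℂ) := by
  have hre : 1 < ((k : ℂ) + 2).re := by
    simp only [Complex.add_re, Complex.natCast_re, Complex.re_ofNat]
    linarith [Nat.cast_nonneg (α := ℝ) k]
  rw [zeta_eq_tsum_one_div_nat_add_one_cpow hre, Complex.ofReal_tsum]
  refine tsum_congr fun n => ?_
  rw [show (k : ℂ) + 2 = ((k + 2 : ℕ) : ℂ) by push_cast; ring, Complex.cpow_natCast]
  push_cast
  rw [one_div_pow]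

namespace ExpInvGenfun

noncomputable def expInvRemainder (n : ℕ) : ℝ :=
  Real.exp (1 / ((n : ℝ) + 1)) - 1 - 1 / ((n : ℝ) + 1)

theorem hasSum_expInvRemainder (n : ℕ) :
    HasSum (fun k : ℕ => (1 / ((n : ℝ) + 1)) ^ (k + 2) / (k + 2).factorial)
      (expInvRemainder n) :=
  Real.hasSum_pow_add_two_div_factorial _

theorem expInvRemainder_nonneg (n : ℕ) : 0 ≤ expInvRemainder n := by
  have := Real.add_one_le_exp (1 / ((n : ℝ) + 1))
  rw [expInvRemainder]; linarith

theorem expInvRemainder_le (n : ℕ) : expInvRemainder n ≤ 1 / ((n : ℝ) + 1) ^ 2 := by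
  have hy : |1 / ((n : ℝ) + 1)| ≤ 1 := by
    rw [abs_of_nonneg (by positivity), div_le_one (by positivity)]
    linarith [Nat.cast_nonneg (α := ℝ) n]
  rw [← one_div_pow]
  exact (le_abs_self _).trans (Real.abs_exp_sub_one_sub_id_le hy)

theorem summable_expInvRemainder : Summable expInvRemainder :=
  summable_one_div_nat_add_one_sq.of_nonneg_of_le expInvRemainder_nonneg expInvRemainder_le

theorem hasSum_riemannZeta_div_factorial :
    HasSum (fun k : ℕ => riemannZeta ((k : ℂ) + 2) / ((k + 2).factorial : ℂ))
      ((∑' n, expInvRemainder n : ℝ) : ℂ) := by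
  set f : ℕ × ℕ → ℝ := fun p => (1 / ((p.1 : ℝ) + 1)) ^ (p.2 + 2) / (p.2 + 2).factorial
  have hf : Summable f := (summable_prod_of_nonneg fun p => by positivity).mpr
    ⟨fun n => (hasSum_expInvRemainder n).summable,
      summable_expInvRemainder.congr fun n => (hasSum_expInvRemainder n).tsum_eq.symm⟩
  have hrows : HasSum expInvRemainder (∑' p, f p) :=
    hf.hasSum.prod_fiberwise hasSum_expInvRemainder
  have hcols (k : ℕ) :
      HasSum (fun n => (f (n, k) : ℂ))
        (riemannZeta ((k : ℂ) + 2) / ((k + 2).factorial : ℂ)) := by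
    rw [riemannZeta_nat_add_two]
    have hcol : Summable fun n => f (n, k) := hf.prod_symm.prod_factor k
    convert Complex.hasSum_ofReal.mpr hcol.hasSum using 1
    simp only [f, tsum_div_const]
    push_cast
    rfl
  rw [hrows.tsum_eq]
  exact (Complex.hasSum_ofReal.mpr
    ((Equiv.prodComm ℕ ℕ).hasSum_iff.mpr hf.hasSum)).prod_fiberwise hcols

theorem summable_expInvRemainder_mul_one_sub_pow {x : ℝ} (hx : |x| ≤ 1) :
    Summable fun n => expInvRemainder n * (1 - x ^ (n + 1)) := by
  have hpow : Summable fun n => expInvRemainder n * x ^ (n + 1) :=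
    summable_expInvRemainder.of_norm_bounded fun n => by
      rw [norm_mul, Real.norm_of_nonneg (expInvRemainder_nonneg n), norm_pow, Real.norm_eq_abs]
      exact mul_le_of_le_one_right (expInvRemainder_nonneg n) (pow_le_one₀ (abs_nonneg x) hx)
  simpa only [mul_sub, mul_one] using summable_expInvRemainder.sub hpow

theorem tsum_exp_inv_mul_pow_eq {x : ℝ} (hx : |x| < 1) :
    ∑' n : ℕ, Real.exp (1 / ((n : ℝ) + 1)) * x ^ (n + 1) =
      1 / (1 - x) + Real.log (1 / (1 - x)) + (-1 + ∑' n, expInvRemainder n)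
        - ∑' n, expInvRemainder n * (1 - x ^ (n + 1)) := by
  have hgeom : HasSum (fun n : ℕ => x ^ (n + 1)) (x * (1 - x)⁻¹) := by
    simpa only [pow_succ'] using (hasSum_geometric_of_abs_lt_one hx).mul_left x
  have hrem : HasSum (fun n => expInvRemainder n * x ^ (n + 1))
      (∑' n, expInvRemainder n - ∑' n, expInvRemainder n * (1 - x ^ (n + 1))) := by
    simpa only [mul_sub, mul_one, sub_sub_cancel] using summable_expInvRemainder.hasSum.sub
      (summable_expInvRemainder_mul_one_sub_pow hx.le).hasSum
  have hx1 : 1 - x ≠ 0 := by linarith [le_abs_self x]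
  convert ((hgeom.add (Real.hasSum_pow_div_log_of_abs_lt_one hx)).add hrem).tsum_eq using 1
  · refine tsum_congr fun n => ?_
    rw [expInvRemainder]
    field_simp
    ring
  · rw [one_div (1 - x), Real.log_inv]
    field_simp
    ring

theorem sum_range_expInvRemainder_mul_one_sub_pow_le {x : ℝ} (hx₀ : -1 ≤ x) (hx₁ : x ≤ 1)
    (N : ℕ) :
    ∑ n ∈ range N, expInvRemainder n * (1 - x ^ (n + 1)) ≤ (1 - x) * (1 + Real.log N) := by
  have hterm (n : ℕ) :
      expInvRemainder n * (1 - x ^ (n + 1)) ≤ (1 - x) * (1 / ((n : ℝ) + 1)) := by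
    have hbernoulli : 1 - x ^ (n + 1) ≤ ((n : ℝ) + 1) * (1 - x) := by
      have := one_add_mul_le_pow (a := x - 1) (by linarith) (n + 1)
      rw [add_sub_cancel] at this
      push_cast at this
      linarith
    calc expInvRemainder n * (1 - x ^ (n + 1))
        ≤ expInvRemainder n * (((n : ℝ) + 1) * (1 - x)) :=
          mul_le_mul_of_nonneg_left hbernoulli (expInvRemainder_nonneg n)
      _ ≤ 1 / ((n : ℝ) + 1) ^ 2 * (((n : ℝ) + 1) * (1 - x)) :=
          mul_le_mul_of_nonneg_right (expInvRemainder_le n)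
            (mul_nonneg (by positivity) (by linarith))
      _ = (1 - x) * (1 / ((n : ℝ) + 1)) := by field_simp
  have hharmonic : ∑ n ∈ range N, 1 / ((n : ℝ) + 1) = harmonic N := by
    simp [harmonic, one_div]
  calc _ ≤ ∑ n ∈ range N, (1 - x) * (1 / ((n : ℝ) + 1)) := sum_le_sum fun n _ => hterm n
    _ = (1 - x) * harmonic N := by rw [← mul_sum, hharmonic]
    _ ≤ (1 - x) * (1 + Real.log N) :=
      mul_le_mul_of_nonneg_left (harmonic_le_one_add_log N) (by linarith)

theorem tsum_expInvRemainder_mul_one_sub_pow_le {x : ℝ} (hx₀ : 0 ≤ x) (hx₁ : x ≤ 1)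
    {N : ℕ} (hN : N ≠ 0) :
    ∑' n, expInvRemainder n * (1 - x ^ (n + 1)) ≤
      (1 - x) * (1 + Real.log N) + 1 / (N : ℝ) := by
  have hs := summable_expInvRemainder_mul_one_sub_pow (abs_le.mpr ⟨by linarith, hx₁⟩)
  have htail : ∑' i, expInvRemainder (i + N) * (1 - x ^ (i + N + 1))
      ≤ ∑' i : ℕ, 1 / (((i + N : ℕ) : ℝ) + 1) ^ 2 :=
    Summable.tsum_le_tsum
      (fun i => (mul_le_of_le_one_right (expInvRemainder_nonneg _)
        (sub_le_self _ (pow_nonneg hx₀ _))).trans (expInvRemainder_le (i + N)))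
      ((summable_nat_add_iff N).mpr hs)
      ((summable_nat_add_iff N).mpr summable_one_div_nat_add_one_sq)
  rw [← hs.sum_add_tsum_nat_add N]
  exact add_le_add (sum_range_expInvRemainder_mul_one_sub_pow_le (by linarith) hx₁ N)
    (htail.trans (tsum_one_div_nat_add_one_sq_tail_le hN))

theorem tsum_expInvRemainder_mul_one_sub_pow_le_log {x : ℝ} (hx₀ : 0 ≤ x) (hx₁ : x < 1) :
    ∑' n, expInvRemainder n * (1 - x ^ (n + 1)) ≤ (1 - x) * (3 + Real.log (1 / (1 - x))) := by
  set t := 1 - x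
  have ht : 0 < t := by linarith
  set N := ⌊1 / t⌋₊
  have hN : 1 ≤ N := Nat.le_floor (by rw [Nat.cast_one, le_div_iff₀ ht]; linarith)
  have hN' : (1 : ℝ) ≤ N := by exact_mod_cast hN
  have hlog : Real.log N ≤ Real.log (1 / t) :=
    Real.log_le_log (by linarith) (Nat.floor_le (by positivity))
  have hinv : 1 / (N : ℝ) ≤ 2 * t := by
    have h := Nat.lt_floor_add_one (1 / t)
    rw [div_lt_iff₀ ht] at h
    rw [div_le_iff₀ (by linarith)]
    nlinarith
  calc _ ≤ t * (1 + Real.log N) + 1 / (N : ℝ) :=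
        tsum_expInvRemainder_mul_one_sub_pow_le hx₀ hx₁.le (by omega)
    _ ≤ t * (3 + Real.log (1 / t)) := by nlinarith

theorem isBigO_tsum_expInvRemainder_mul_one_sub_pow :
    (fun x : ℝ => ∑' n, expInvRemainder n * (1 - x ^ (n + 1)))
      =O[𝓝[<] 1] fun x => (1 - x) * Real.log (1 / (1 - x)) := by
  have hexp : Real.exp (-1) < 1 := Real.exp_lt_one_iff.mpr (by norm_num)
  refine IsBigO.of_bound 4 ?_
  filter_upwards [Ioo_mem_nhdsLT (show 1 - Real.exp (-1) < 1 by linarith [Real.exp_pos (-1)])]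
    with x ⟨hx₀, hx₁⟩
  have ht : 0 < 1 - x := by linarith
  have hL : 1 ≤ Real.log (1 / (1 - x)) := by
    rw [one_div, Real.log_inv, le_neg, ← Real.log_exp (-1)]
    exact Real.log_le_log ht (by linarith)
  have hE : 0 ≤ ∑' n, expInvRemainder n * (1 - x ^ (n + 1)) :=
    tsum_nonneg fun n => mul_nonneg (expInvRemainder_nonneg n)
      (sub_nonneg.mpr (pow_le_one₀ (by linarith) hx₁.le))
  rw [Real.norm_of_nonneg hE, Real.norm_of_nonneg (by positivity)]
  calc _ ≤ (1 - x) * (3 + Real.log (1 / (1 - x))) :=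
        tsum_expInvRemainder_mul_one_sub_pow_le_log (by linarith) hx₁
    _ ≤ 4 * ((1 - x) * Real.log (1 / (1 - x))) := by nlinarith

end ExpInvGenfun

open ExpInvGenfun in
/-- Let `C = −1 + ∑_{k=2}^∞ ζ(k)/k!`.  Then, as `z → −1⁺` with `z ∈ (−1, 0)` real,
`∑_{n≥1} e^{1/n}(−z)^n = 1/(1+z) + log(1/(1+z)) + C + O((1+z)·log(1/(1+z)))`. -/
theorem exp_inv_genfun_at_minus_one
    (C : ℂ)
    (hC : C = -1 + ∑' k : ℕ, riemannZeta ((k : ℂ) + 2) / ((k + 2).factorial : ℂ)) :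
    (fun z : ℝ =>
        (∑' n : ℕ, ((Real.exp (1 / ((n : ℝ) + 1)) : ℝ) : ℂ) * (-(z : ℂ)) ^ (n + 1)) -
          (1 / (1 + (z : ℂ)) + ((Real.log (1 / (1 + z)) : ℝ) : ℂ) + C))
      =O[nhdsWithin (-1 : ℝ) (Set.Ioo (-1) 0)]
        fun z : ℝ => (1 + z) * Real.log (1 / (1 + z)) := by
  have hC' : C = ((-1 + ∑' n, expInvRemainder n : ℝ) : ℂ) := by
    rw [hC, hasSum_riemannZeta_div_factorial.tsum_eq]; push_cast; rfl
  have hneg : Tendsto (fun z : ℝ => -z) (𝓝[Set.Ioo (-1) 0] (-1)) (𝓝[<] 1) :=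
    tendsto_nhdsWithin_of_tendsto_nhds_of_eventually_within _
      ((continuous_neg.tendsto' (-1) 1 (neg_neg 1)).mono_left nhdsWithin_le_nhds)
      (eventually_nhdsWithin_of_forall fun z hz => Set.mem_Iio.mpr (by linarith [hz.1]))
  have herr := (isBigO_tsum_expInvRemainder_mul_one_sub_pow.comp_tendsto hneg).neg_left
  refine (Complex.isBigO_ofReal_left.mpr herr).congr' ?_
    (by simp [Function.comp_def, sub_neg_eq_add])
  filter_upwards [self_mem_nhdsWithin] with z hz
  have hz' : |-z| < 1 := by rw [abs_lt]; constructor <;> linarith [hz.1, hz.2]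
  have hseries :
      ∑' n : ℕ, ((Real.exp (1 / ((n : ℝ) + 1)) : ℝ) : ℂ) * (-(z : ℂ)) ^ (n + 1) =
        ((∑' n : ℕ, Real.exp (1 / ((n : ℝ) + 1)) * (-z) ^ (n + 1) : ℝ) : ℂ) := by
    rw [Complex.ofReal_tsum]; push_cast; rfl
  rw [Function.comp_apply, hseries, tsum_exp_inv_mul_pow_eq hz', hC', sub_neg_eq_add]
  push_cast
  ring
end

section
/- Let c < 0 and 0 < θ < 1 be real numbers. For each k ∈ ℕ the series u_k := (−1)^k·∑_{n=1}^∞ C(n,k)·e^{c n^θ} converges, and for every K ∈ ℕ, as z → −1⁺ with z real in (−1, 0), ∑_{n=1}^∞ e^{c n^θ}·(−z)^n − ∑_{k=0}^{K−1} u_k·(1+z)^k = O((1+z)^K). That is, u₀ + u₁(1+z) + u₂(1+z)² + ⋯ is an asymptotic series for ∑_{n≥1} e^{c n^θ}(−z)^n as z → −1⁺. -/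
/-!
Put `w = 1 + z`, so that `-z = 1 - w`. Expanding `(1 - w) ^ (n + 1)` binomially and exchanging the
finite sum over `k < K` with the sum over `n`, the error term becomes `∑ a n * R (n + 1) K`, where
`R m K` is the remainder of the binomial expansion of `(1 - w) ^ m` after `K` terms. For
`0 ≤ w ≤ 1` these partial sums alternate around `(1 - w) ^ m` (Pascal's rule and induction on `m`),
whence `|R m K| ≤ C(m, K) w ^ K`, and the error is at most `w ^ K ∑ C(n + 1, K) a n`. With
`a n = exp (c (n + 1) ^ θ)` all these sums converge, because the stretched exponential decays faster
than any power of `n`.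
-/

open Filter Asymptotics Finset Real Topology

section BinomialRemainder

variable {R : Type*} [CommRing R]

def binomialRemainder (w : R) (m K : ℕ) : R :=
  (1 - w) ^ m - ∑ k ∈ range K, (m.choose k : R) * (-w) ^ k

lemma binomialRemainder_zero_right (w : R) (m : ℕ) : binomialRemainder w m 0 = (1 - w) ^ m := by
  simp [binomialRemainder]

lemma binomialRemainder_zero_succ (w : R) (K : ℕ) : binomialRemainder w 0 (K + 1) = 0 := by
  simp [binomialRemainder, sum_range_succ']

lemma binomialRemainder_succ_succ (w : R) (m K : ℕ) :
    binomialRemainder w (m + 1) (K + 1) =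
      binomialRemainder w m (K + 1) - w * binomialRemainder w m K := by
  have hshift (n : ℕ) (k : ℕ) : (n : R) * (-w) ^ (k + 1) = -(w * (n * (-w) ^ k)) := by ring
  simp only [binomialRemainder, sum_range_succ' _ K, Nat.choose_succ_succ, Nat.cast_add, add_mul,
    hshift, sum_add_distrib, sum_neg_distrib, mul_sub, mul_sum, Nat.choose_zero_right]
  ring

variable [LinearOrder R] [IsStrictOrderedRing R]

lemma binomialRemainder_bounds {w : R} (hw0 : 0 ≤ w) (hw1 : w ≤ 1) (m K : ℕ) :
    0 ≤ (-1) ^ K * binomialRemainder w m K ∧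
      (-1) ^ K * binomialRemainder w m K ≤ m.choose K * w ^ K := by
  induction m generalizing K with
  | zero => cases K <;> simp [binomialRemainder_zero_right, binomialRemainder_zero_succ]
  | succ m ih =>
    cases K with
    | zero =>
      simpa [binomialRemainder_zero_right] using
        ⟨pow_nonneg (sub_nonneg.2 hw1) _, pow_le_one₀ (sub_nonneg.2 hw1) (by linarith)⟩
    | succ K =>
      have hsplit : (-1) ^ (K + 1) * binomialRemainder w (m + 1) (K + 1) =
          (-1) ^ (K + 1) * binomialRemainder w m (K + 1) +
            w * ((-1) ^ K * binomialRemainder w m K) := by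
        rw [binomialRemainder_succ_succ]; ring
      have hchoose : ((m + 1).choose (K + 1) : R) * w ^ (K + 1) =
          m.choose (K + 1) * w ^ (K + 1) + w * (m.choose K * w ^ K) := by
        rw [Nat.choose_succ_succ']; push_cast; ring
      obtain ⟨h1, h1'⟩ := ih (K + 1)
      obtain ⟨h2, h2'⟩ := ih K
      rw [hsplit, hchoose]
      exact ⟨add_nonneg h1 (mul_nonneg hw0 h2),
        add_le_add h1' (mul_le_mul_of_nonneg_left h2' hw0)⟩

lemma abs_binomialRemainder_le {w : R} (hw0 : 0 ≤ w) (hw1 : w ≤ 1) (m K : ℕ) :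
    |binomialRemainder w m K| ≤ m.choose K * w ^ K := by
  obtain ⟨hnonneg, hle⟩ := binomialRemainder_bounds hw0 hw1 m K
  rwa [← abs_of_nonneg hnonneg, abs_mul, abs_neg_one_pow, one_mul] at hle

end BinomialRemainder

lemma tendsto_rpow_mul_exp_mul_rpow_atTop_nhds_zero (s : ℝ) {c θ : ℝ} (hc : c < 0) (hθ : 0 < θ) :
    Tendsto (fun x : ℝ => x ^ s * exp (c * x ^ θ)) atTop (𝓝 0) := by
  have hsub := (tendsto_rpow_mul_exp_neg_mul_atTop_nhds_zero (s / θ) (-c) (neg_pos.2 hc)).comp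
    (tendsto_rpow_atTop hθ)
  refine hsub.congr' ?_
  filter_upwards [eventually_ge_atTop 0] with x hx
  simp only [Function.comp, neg_neg, ← rpow_mul hx, mul_div_cancel₀ s hθ.ne']

lemma summable_rpow_mul_exp_mul_rpow (s : ℝ) {c θ : ℝ} (hc : c < 0) (hθ : 0 < θ) :
    Summable fun n : ℕ => (n : ℝ) ^ s * exp (c * (n : ℝ) ^ θ) := by
  have hbounded : (fun n : ℕ => (n : ℝ) ^ (s + 2) * exp (c * (n : ℝ) ^ θ)) =O[atTop] (1 : ℕ → ℝ) :=
    ((tendsto_rpow_mul_exp_mul_rpow_atTop_nhds_zero (s + 2) hc hθ).comp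
      tendsto_natCast_atTop_atTop).isBigO_one ℝ
  refine summable_of_isBigO_nat (summable_nat_rpow.2 (by norm_num : (-2 : ℝ) < -1)) ?_
  refine ((hbounded.mul (isBigO_refl (fun n : ℕ => (n : ℝ) ^ (-2 : ℝ)) atTop)).congr' ?_ ?_)
  · filter_upwards [eventually_gt_atTop 0] with n hn
    have hn' : (0 : ℝ) < n := Nat.cast_pos.2 hn
    rw [mul_right_comm, ← rpow_add hn', add_neg_cancel_right]
  · simp

lemma summable_choose_mul_exp_mul_rpow (k : ℕ) {c θ : ℝ} (hc : c < 0) (hθ : 0 < θ) :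
    Summable fun n : ℕ => ((n + 1).choose k : ℝ) * exp (c * ((n : ℝ) + 1) ^ θ) := by
  have hpow : Summable fun n : ℕ => ((n : ℝ) + 1) ^ (k : ℝ) * exp (c * ((n : ℝ) + 1) ^ θ) := by
    simpa using (summable_nat_add_iff 1).2 (summable_rpow_mul_exp_mul_rpow k hc hθ)
  refine hpow.of_nonneg_of_le (fun n => by positivity) fun n => ?_
  rw [rpow_natCast]
  gcongr
  exact_mod_cast Nat.choose_le_pow (n + 1) k

section TaylorCoefficients

variable {a : ℕ → ℝ}

lemma abs_tsum_mul_one_sub_pow_sub_taylor_le (ha : ∀ n, 0 ≤ a n)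
    (hsum : ∀ k, Summable fun n : ℕ => ((n + 1).choose k : ℝ) * a n)
    {w : ℝ} (hw0 : 0 ≤ w) (hw1 : w ≤ 1) (K : ℕ) :
    |(∑' n, a n * (1 - w) ^ (n + 1)) -
        ∑ k ∈ range K, (-1) ^ k * (∑' n, ((n + 1).choose k : ℝ) * a n) * w ^ k| ≤
      (∑' n, ((n + 1).choose K : ℝ) * a n) * w ^ K := by
  have hgeom : Summable fun n => a n * (1 - w) ^ (n + 1) := by
    refine (by simpa using hsum 0 : Summable a).of_nonneg_of_le
      (fun n => mul_nonneg (ha n) (pow_nonneg (sub_nonneg.2 hw1) _)) fun n => ?_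
    exact mul_le_of_le_one_right (ha n) (pow_le_one₀ (sub_nonneg.2 hw1) (by linarith))
  have hrem : HasSum (fun n => a n * binomialRemainder w (n + 1) K)
      ((∑' n, a n * (1 - w) ^ (n + 1)) -
        ∑ k ∈ range K, (-1) ^ k * (∑' n, ((n + 1).choose k : ℝ) * a n) * w ^ k) := by
    have hcoeff : ∑ k ∈ range K, (-1) ^ k * (∑' n, ((n + 1).choose k : ℝ) * a n) * w ^ k =
        ∑ k ∈ range K, (∑' n, ((n + 1).choose k : ℝ) * a n) * (-w) ^ k :=
      sum_congr rfl fun k _ => by rw [neg_pow]; ring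
    have hterm : (fun n => a n * binomialRemainder w (n + 1) K) = fun n =>
        a n * (1 - w) ^ (n + 1) - ∑ k ∈ range K, ((n + 1).choose k : ℝ) * a n * (-w) ^ k := by
      ext n
      rw [binomialRemainder, mul_sub, mul_sum]
      exact congrArg _ (sum_congr rfl fun k _ => by ring)
    rw [hcoeff, hterm]
    exact hgeom.hasSum.sub (hasSum_sum fun k _ => (hsum k).hasSum.mul_right ((-w) ^ k))
  rw [← hrem.tsum_eq, ← Real.norm_eq_abs]
  refine tsum_of_norm_bounded ((hsum K).hasSum.mul_right (w ^ K)) fun n => ?_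
  rw [norm_mul, Real.norm_of_nonneg (ha n), Real.norm_eq_abs, mul_right_comm, mul_comm _ (a n)]
  exact mul_le_mul_of_nonneg_left (abs_binomialRemainder_le hw0 hw1 (n + 1) K) (ha n)

lemma isBigO_tsum_mul_neg_pow_sub_taylor (ha : ∀ n, 0 ≤ a n)
    (hsum : ∀ k, Summable fun n : ℕ => ((n + 1).choose k : ℝ) * a n) (K : ℕ) :
    (fun z : ℝ => (∑' n, a n * (-z) ^ (n + 1)) -
        ∑ k ∈ range K, (-1) ^ k * (∑' n, ((n + 1).choose k : ℝ) * a n) * (1 + z) ^ k)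
      =O[𝓝[Set.Ioo (-1) 0] (-1)] fun z => (1 + z) ^ K := by
  refine IsBigO.of_bound (∑' n, ((n + 1).choose K : ℝ) * a n) ?_
  filter_upwards [self_mem_nhdsWithin] with z ⟨hz1, hz0⟩
  have hw0 : 0 ≤ 1 + z := by linarith
  rw [Real.norm_eq_abs, Real.norm_eq_abs, abs_pow, abs_of_nonneg hw0, ← sub_add_cancel_left 1 z]
  exact abs_tsum_mul_one_sub_pow_sub_taylor_le ha hsum hw0 (by linarith) K

end TaylorCoefficients

theorem genExp_at_minus_one_c_neg_general
    (c θ : ℝ) (hc : c < 0) (hθ0 : 0 < θ)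
    (u : ℕ → ℝ)
    (hu : ∀ k : ℕ, u k = (-1 : ℝ) ^ k *
      ∑' n : ℕ, ((n + 1).choose k : ℝ) * Real.exp (c * ((n : ℝ) + 1) ^ θ)) :
    (∀ k : ℕ, Summable (fun n : ℕ =>
        ((n + 1).choose k : ℝ) * Real.exp (c * ((n : ℝ) + 1) ^ θ))) ∧
    ∀ K : ℕ,
      (fun z : ℝ =>
          (∑' n : ℕ, Real.exp (c * ((n : ℝ) + 1) ^ θ) * (-z) ^ (n + 1)) -
            ∑ k ∈ Finset.range K, u k * (1 + z) ^ k)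
        =O[nhdsWithin (-1 : ℝ) (Set.Ioo (-1) 0)] fun z : ℝ => (1 + z) ^ K := by
  have hsum (k : ℕ) := summable_choose_mul_exp_mul_rpow k hc hθ0
  refine ⟨hsum, fun K => ?_⟩
  simp only [hu]
  exact isBigO_tsum_mul_neg_pow_sub_taylor (fun n => (exp_pos _).le) hsum K

/-- Let `c < 0` and `0 < θ < 1`.  For each `k ∈ ℕ`, the series
`u_k = (−1)^k ∑_{n≥1} C(n,k) e^{c n^θ}` converges, and for every `K ∈ ℕ`, as `z → −1⁺`
with `z ∈ (−1, 0)` real,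
`∑_{n≥1} e^{c n^θ}(−z)^n − ∑_{k=0}^{K−1} u_k (1+z)^k = O((1+z)^K)`; that is,
`u₀ + u₁(1+z) + u₂(1+z)² + ⋯` is an asymptotic series for `∑_{n≥1} e^{c n^θ}(−z)^n`. -/
theorem genExp_at_minus_one_c_neg
    (c θ : ℝ) (hc : c < 0) (hθ0 : 0 < θ) (hθ1 : θ < 1)
    (u : ℕ → ℝ)
    (hu : ∀ k : ℕ, u k = (-1 : ℝ) ^ k *
      ∑' n : ℕ, ((n + 1).choose k : ℝ) * Real.exp (c * ((n : ℝ) + 1) ^ θ)) :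
    (∀ k : ℕ, Summable (fun n : ℕ =>
        ((n + 1).choose k : ℝ) * Real.exp (c * ((n : ℝ) + 1) ^ θ))) ∧
    ∀ K : ℕ,
      (fun z : ℝ =>
          (∑' n : ℕ, Real.exp (c * ((n : ℝ) + 1) ^ θ) * (-z) ^ (n + 1)) -
            ∑ k ∈ Finset.range K, u k * (1 + z) ^ k)
        =O[nhdsWithin (-1 : ℝ) (Set.Ioo (-1) 0)] fun z : ℝ => (1 + z) ^ K :=
  genExp_at_minus_one_c_neg_general c θ hc hθ0 u hu
end
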